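/- arXiv:1002.2446 — 2 statements merged into one kernel-verified Lean document; each statement's English description precedes it below -/
import Mathlib

section
/- If F is a left-continuous non-anticipative functional (continuous in the d_infinity metric with respect to horizontal restriction and supremum-norm perturbation), then for any cadlag path (x,v) defined on [0,T], the map t ↦ F_t(x_{t-}, v_{t-}) is left-continuous on [0,T], where x_{t-} denotes the path equal to x on [0,t) and equal to x(t-) at t. -/
open Filter Set MeasureTheory Function

noncomputable section

/-- Horizontal extension of a path beyond time `t` by its value at `t`. -/
def hext {E : Type*} (x : ℝ → E) (t : ℝ) : ℝ → E := fun u => x (min u t)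

/-- Vertical perturbation of a path at time `t` by `e`. -/
def vpert {E : Type*} [Add E] (x : ℝ → E) (t : ℝ) (e : E) : ℝ → E :=
  fun u => if u = t then x t + e else x u

/-- The stopped path `x_{t-}`: equal to `x` before `t`, and to the left limit `x(t-)` from `t` on. -/
def stoppedPath {E : Type*} [TopologicalSpace E] (x : ℝ → E) (t : ℝ) : ℝ → E :=
  fun u => if u < t then x u else Function.leftLim x t

/-- A path is cadlag: right-continuous with left limits. -/
def Cadlag {E : Type*} [TopologicalSpace E] (x : ℝ → E) : Prop :=
  (∀ t : ℝ, ContinuousWithinAt x (Set.Ici t) t) ∧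
    ∀ t : ℝ, Filter.Tendsto x (nhdsWithin t (Set.Iio t)) (nhds (Function.leftLim x t))

/-- The distance `d_∞` between `(x,v)` viewed as paths on `[0,t]` and `(x',v')` viewed as
paths on `[0,t-h]`, the latter being horizontally extended to `[0,t]`. -/
def dInfty {E V : Type*} [NormedAddCommGroup E] [NormedAddCommGroup V]
    (t h : ℝ) (x : ℝ → E) (v : ℝ → V) (x' : ℝ → E) (v' : ℝ → V) : ℝ :=
  (⨆ u : Set.Icc (0:ℝ) t, ‖hext x' (t - h) u.1 - x u.1‖)
    + (⨆ u : Set.Icc (0:ℝ) t, ‖hext v' (t - h) u.1 - v u.1‖) + h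

/-- A non-anticipative functional is left-continuous (class `𝔽C^{0,0}_l`). -/
def LeftContinuousNAF {E V : Type*} [NormedAddCommGroup E] [NormedAddCommGroup V]
    (F : ℝ → (ℝ → E) → (ℝ → V) → ℝ) (T : ℝ) : Prop :=
  ∀ t ∈ Set.Icc (0:ℝ) T, ∀ (x : ℝ → E) (v : ℝ → V), ∀ ε > 0, ∃ η > 0,
    ∀ h ∈ Set.Icc (0:ℝ) t, ∀ (x' : ℝ → E) (v' : ℝ → V),
      dInfty t h x v x' v' < η → |F t x v - F (t - h) x' v'| < ε

/-- The horizontal derivative of a non-anticipative functional at `(x,v)` at time `t` is `L`. -/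
def horizDerivAt {E V : Type*} (F : ℝ → (ℝ → E) → (ℝ → V) → ℝ)
    (t : ℝ) (x : ℝ → E) (v : ℝ → V) (L : ℝ) : Prop :=
  Filter.Tendsto (fun h => (F (t + h) (hext x t) (hext v t) - F t x v) / h)
    (nhdsWithin 0 (Set.Ioi 0)) (nhds L)

lemma key {E : Type*} [NormedAddCommGroup E] (x : ℝ → E) (hx : Cadlag x) (t ε : ℝ)
    (hε : 0 < ε) :
    ∃ δ > 0, (∀ u, t - δ < u → u < t → ‖x u - leftLim x t‖ ≤ ε) ∧
      (∀ s, t - δ < s → s < t → ‖leftLim x s - leftLim x t‖ ≤ ε) := by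
  have h := (Metric.tendsto_nhdsWithin_nhds).1 (hx.2 t) ε hε
  obtain ⟨δ, hδ, hd⟩ := h
  have h1 : ∀ u, t - δ < u → u < t → ‖x u - leftLim x t‖ ≤ ε := by
    intro u h1 h2
    have := hd (show u ∈ Set.Iio t from h2) (by rw [Real.dist_eq, abs_of_neg (by linarith)]; linarith)
    rw [dist_eq_norm] at this; linarith
  refine ⟨δ, hδ, h1, fun s hs1 hs2 => ?_⟩
  have hev : ∀ᶠ u in nhdsWithin s (Set.Iio s), ‖x u - leftLim x t‖ ≤ ε := by
    filter_upwards [Ioo_mem_nhdsLT hs1] with u hu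
    exact h1 u hu.1 (hu.2.trans hs2)
  have htend : Tendsto (fun u => ‖x u - leftLim x t‖) (nhdsWithin s (Set.Iio s))
      (nhds ‖leftLim x s - leftLim x t‖) := ((hx.2 s).sub_const _).norm
  exact le_of_tendsto htend hev

lemma sup_bound {E : Type*} [NormedAddCommGroup E] (x : ℝ → E) (t s ε : ℝ)
    (hst : s < t) (hε : 0 ≤ ε)
    (h1 : ∀ u, s ≤ u → u < t → ‖x u - leftLim x t‖ ≤ ε)
    (h2 : ‖leftLim x s - leftLim x t‖ ≤ ε) :
    ∀ u ∈ Set.Icc (0:ℝ) t, ‖hext (stoppedPath x s) s u - stoppedPath x t u‖ ≤ 2 * ε := by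
  intro u hu
  unfold hext stoppedPath
  rcases lt_or_ge u s with h | h
  · rw [min_eq_left h.le, if_pos h, if_pos (h.trans hst), sub_self, norm_zero]; positivity
  · rw [min_eq_right h, if_neg (lt_irrefl s)]
    rcases lt_or_ge u t with h' | h'
    · rw [if_pos h']
      calc ‖leftLim x s - x u‖ ≤ ‖leftLim x s - leftLim x t‖ + ‖leftLim x t - x u‖ :=
            norm_sub_le_norm_sub_add_norm_sub _ _ _
        _ ≤ ε + ε := by
            refine add_le_add h2 ?_
            rw [norm_sub_rev]; exact h1 u h h'
        _ = 2 * ε := by ring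
    · rw [if_neg (not_lt.2 h')]
      calc ‖leftLim x s - leftLim x t‖ ≤ ε := h2
        _ ≤ 2 * ε := by linarith

/-- Pathwise regularity: if `F` is a left-continuous non-anticipative
functional, then for any cadlag path `(x,v)` on `[0,T]`, the map `t ↦ F_t(x_{t-}, v_{t-})`
is left-continuous on `(0,T]`. -/
theorem statement0 {E V : Type*} [NormedAddCommGroup E] [NormedAddCommGroup V]
    (T : ℝ) (hT : 0 < T)
    (F : ℝ → (ℝ → E) → (ℝ → V) → ℝ)
    (hF : LeftContinuousNAF F T)
    (x : ℝ → E) (v : ℝ → V) (hx : Cadlag x) (hv : Cadlag v) :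
    ∀ t ∈ Set.Ioc (0:ℝ) T,
      Filter.Tendsto (fun s => F s (stoppedPath x s) (stoppedPath v s))
        (nhdsWithin t (Set.Iio t))
        (nhds (F t (stoppedPath x t) (stoppedPath v t))) := by
  intro t ht
  rw [Metric.tendsto_nhdsWithin_nhds]
  intro ε hε
  obtain ⟨η, hη, hFt⟩ := hF t ⟨ht.1.le, ht.2⟩ (stoppedPath x t) (stoppedPath v t) ε hε
  have hε' : (0:ℝ) < η / 5 := by linarith
  obtain ⟨δ₁, hδ₁, hx1, hx2⟩ := key x hx t (η/5) hε'
  obtain ⟨δ₂, hδ₂, hv1, hv2⟩ := key v hv t (η/5) hε'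
  refine ⟨min (min δ₁ δ₂) (min t (η/5)), lt_min (lt_min hδ₁ hδ₂) (lt_min ht.1 hε'), ?_⟩
  intro s hs hds
  have hst : s < t := hs
  have hts : t - s < min (min δ₁ δ₂) (min t (η/5)) := by
    rw [Real.dist_eq, abs_of_neg (by linarith)] at hds; linarith
  have hd1 : t - δ₁ < s := by have := hts.trans_le ((min_le_left _ _).trans (min_le_left _ _)); linarith
  have hd2 : t - δ₂ < s := by have := hts.trans_le ((min_le_left _ _).trans (min_le_right _ _)); linarith
  have hht : t - s < t := hts.trans_le ((min_le_right _ _).trans (min_le_left _ _))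
  have hhη : t - s < η/5 := hts.trans_le ((min_le_right _ _).trans (min_le_right _ _))
  have hbx : ∀ u ∈ Set.Icc (0:ℝ) t,
      ‖hext (stoppedPath x s) s u - stoppedPath x t u‖ ≤ 2 * (η/5) :=
    sup_bound x t s (η/5) hst hε'.le (fun u hu hu' => hx1 u (lt_of_lt_of_le hd1 hu) hu')
      (hx2 s hd1 hst)
  have hbv : ∀ u ∈ Set.Icc (0:ℝ) t,
      ‖hext (stoppedPath v s) s u - stoppedPath v t u‖ ≤ 2 * (η/5) :=
    sup_bound v t s (η/5) hst hε'.le (fun u hu hu' => hv1 u (lt_of_lt_of_le hd2 hu) hu')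
      (hv2 s hd2 hst)
  have hdist : dInfty t (t - s) (stoppedPath x t) (stoppedPath v t)
      (stoppedPath x s) (stoppedPath v s) < η := by
    unfold dInfty
    rw [sub_sub_cancel]
    have s1 : (⨆ u : Set.Icc (0:ℝ) t, ‖hext (stoppedPath x s) s u.1 - stoppedPath x t u.1‖)
        ≤ 2 * (η/5) := Real.iSup_le (fun u => hbx u.1 u.2) (by positivity)
    have s2 : (⨆ u : Set.Icc (0:ℝ) t, ‖hext (stoppedPath v s) s u.1 - stoppedPath v t u.1‖)
        ≤ 2 * (η/5) := Real.iSup_le (fun u => hbv u.1 u.2) (by positivity)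
    linarith
  have := hFt (t - s) ⟨by linarith, by linarith⟩ (stoppedPath x s) (stoppedPath v s) hdist
  rw [sub_sub_cancel] at this
  rw [Real.dist_eq, abs_sub_comm]
  exact this
end
end

section
/- Let F be a non-anticipative functional continuous at fixed times (in d_∞ metric), and (X, A) a process with continuous paths adapted to a filtration F_t. Then the piecewise-constant approximations Xⁿ, Aⁿ built on the dyadic partition tᵏₙ = kT/2ⁿ satisfy: Yⁿ(t) = F_t(Xⁿ_t, Aⁿ_t) is F_t-measurable for each n, Yⁿ(t) → F_t(X_t,A_t) almost surely, and hence Y(t) = F_t(X_t,A_t) is F_t-measurable; i.e. Y is an adapted process. -/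
open Filter Set MeasureTheory Function

noncomputable section

/-- Piecewise-constant dyadic approximation of a path on `[0,T]`, built on the partition
`tᵏₙ = k T / 2ⁿ`. -/
def dyadicApprox {α : Type*} (T : ℝ) (n : ℕ) (x : ℝ → α) : ℝ → α :=
  fun u => if u = T then x T else x ((⌊u * 2 ^ n / T⌋ : ℤ) * T / 2 ^ n)

open scoped Topology

/-! The dyadic approximation of a path on `[0,t]` only samples it at the finitely many grid
points `kT/2ⁿ ≤ t`, so `Yⁿ(t)` is a continuous function of finitely many `ℱ_t`-measurable
random variables. Continuity of the paths makes the approximations converge uniformly on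
`[0,t]`, and continuity of `F_t` in `d_∞` then gives `Yⁿ(t) → Y(t)` pointwise; a pointwise
limit of measurable functions is measurable. -/

def DInftyContinuousAt {E V : Type*} [NormedAddCommGroup E] [NormedAddCommGroup V] (t : ℝ)
    (G : (ℝ → E) → (ℝ → V) → ℝ) (x : ℝ → E) (v : ℝ → V) : Prop :=
  ∀ ε > 0, ∃ η > 0, ∀ (x' : ℝ → E) (v' : ℝ → V), dInfty t 0 x v x' v' < η → |G x v - G x' v'| < ε

/-- The grid point `tᵏₙ = kT/2ⁿ` with `tᵏₙ ≤ u < tᵏ⁺¹ₙ`. -/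
def dyadicFloor (T : ℝ) (n : ℕ) (u : ℝ) : ℝ := (⌊u * 2 ^ n / T⌋ : ℝ) * T / 2 ^ n

section Dyadic

variable {T : ℝ} (n : ℕ) {u : ℝ}

lemma dyadicFloor_nonneg (hT : 0 < T) (hu : 0 ≤ u) : 0 ≤ dyadicFloor T n u := by
  have : (0 : ℝ) ≤ ⌊u * 2 ^ n / T⌋ := by exact_mod_cast Int.floor_nonneg.mpr (by positivity)
  unfold dyadicFloor
  positivity

lemma dyadicFloor_le (hT : 0 < T) : dyadicFloor T n u ≤ u := by
  have h := Int.floor_le (u * 2 ^ n / T)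
  unfold dyadicFloor
  rw [div_le_iff₀ (by positivity), ← le_div_iff₀ hT]
  exact h

lemma sub_lt_dyadicFloor (hT : 0 < T) : u - T / 2 ^ n < dyadicFloor T n u := by
  have h := Int.lt_floor_add_one (u * 2 ^ n / T)
  rw [div_lt_iff₀ hT, add_one_mul] at h
  unfold dyadicFloor
  rw [sub_lt_iff_lt_add, ← add_div, lt_div_iff₀ (by positivity)]
  exact h

lemma dyadicFloor_mem_Icc (hT : 0 < T) {t : ℝ} (hu : u ∈ Icc 0 t) :
    dyadicFloor T n u ∈ Icc 0 t :=
  ⟨dyadicFloor_nonneg n hT hu.1, (dyadicFloor_le n hT).trans hu.2⟩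

lemma dyadicApprox_eq_comp {α : Type*} (hT : T ≠ 0) (x : ℝ → α) :
    dyadicApprox T n x = x ∘ dyadicFloor T n := by
  funext u
  unfold dyadicApprox dyadicFloor
  split_ifs with h
  · subst h
    have : u * 2 ^ n / u = ((2 ^ n : ℤ) : ℝ) := by push_cast; field_simp
    rw [Function.comp_apply, this, Int.floor_intCast]
    push_cast
    field_simp
  · rfl

theorem tendstoUniformlyOn_dyadicApprox {E : Type*} [PseudoMetricSpace E] (hT : 0 < T)
    {t : ℝ} {x : ℝ → E} (hx : ContinuousOn x (Icc 0 t)) :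
    TendstoUniformlyOn (fun n => dyadicApprox T n x) x atTop (Icc 0 t) := by
  rw [Metric.tendstoUniformlyOn_iff]
  intro ε hε
  obtain ⟨δ, hδ, hxδ⟩ := Metric.uniformContinuousOn_iff.mp
    (isCompact_Icc.uniformContinuousOn_of_continuous hx) ε hε
  have hmesh : Tendsto (fun n : ℕ => T / 2 ^ n) atTop (𝓝 0) := by
    simpa [div_eq_mul_inv] using (tendsto_inv_atTop_zero.comp
      (tendsto_pow_atTop_atTop_of_one_lt one_lt_two)).const_mul T
  filter_upwards [hmesh.eventually (gt_mem_nhds hδ)] with n hn u hu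
  rw [dyadicApprox_eq_comp n hT.ne']
  refine hxδ u hu _ (dyadicFloor_mem_Icc n hT hu) ?_
  rw [Real.dist_eq, abs_of_nonneg (sub_nonneg.mpr (dyadicFloor_le n hT))]
  linarith [sub_lt_dyadicFloor n (u := u) hT]

end Dyadic

section DInfty

variable {E V : Type*} [NormedAddCommGroup E] [NormedAddCommGroup V]

lemma dInfty_zero_le {t a b : ℝ} {x x' : ℝ → E} {v v' : ℝ → V} (ha : 0 ≤ a) (hb : 0 ≤ b)
    (hx : ∀ u ∈ Icc 0 t, ‖x' u - x u‖ ≤ a) (hv : ∀ u ∈ Icc 0 t, ‖v' u - v u‖ ≤ b) :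
    dInfty t 0 x v x' v' ≤ a + b := by
  unfold dInfty hext
  simp only [sub_zero, add_zero]
  refine add_le_add (Real.iSup_le (fun u => ?_) ha) (Real.iSup_le (fun u => ?_) hb)
  · rw [min_eq_left u.2.2]
    exact hx u.1 u.2
  · rw [min_eq_left u.2.2]
    exact hv u.1 u.2

theorem DInftyContinuousAt.tendsto {t : ℝ} {G : (ℝ → E) → (ℝ → V) → ℝ} {x : ℝ → E}
    {v : ℝ → V} (hG : DInftyContinuousAt t G x v) {ι : Type*} {l : Filter ι}
    {xs : ι → ℝ → E} {vs : ι → ℝ → V} (hx : TendstoUniformlyOn xs x l (Icc 0 t))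
    (hv : TendstoUniformlyOn vs v l (Icc 0 t)) :
    Tendsto (fun i => G (xs i) (vs i)) l (𝓝 (G x v)) := by
  rw [Metric.tendsto_nhds]
  intro ε hε
  obtain ⟨η, hη, hGη⟩ := hG ε hε
  rw [Metric.tendstoUniformlyOn_iff] at hx hv
  filter_upwards [hx (η / 3) (by positivity), hv (η / 3) (by positivity)] with i hxi hvi
  have hclose : dInfty t 0 x v (xs i) (vs i) ≤ η / 3 + η / 3 :=
    dInfty_zero_le (by positivity) (by positivity)
      (fun u hu => (dist_eq_norm' (x u) (xs i u)) ▸ (hxi u hu).le)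
      (fun u hu => (dist_eq_norm' (v u) (vs i u)) ▸ (hvi u hu).le)
  rw [Real.dist_eq, abs_sub_comm]
  exact hGη _ _ (by linarith)

lemma tendstoUniformlyOn_comp_of_finite_image {α β γ ι : Type*} [PseudoMetricSpace β]
    [TopologicalSpace γ] {f : γ → ι → β} (hf : Continuous f) (p : γ) {κ : α → ι} {s : Set α}
    (hκ : (κ '' s).Finite) :
    TendstoUniformlyOn (fun q => f q ∘ κ) (f p ∘ κ) (𝓝 p) s := by
  rw [Metric.tendstoUniformlyOn_iff]
  intro ε hε
  have hnear : ∀ i ∈ κ '' s, ∀ᶠ q in 𝓝 p, dist (f p i) (f q i) < ε := fun i _ =>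
    ((continuous_apply i).comp hf).tendsto p |>.eventually (Metric.ball_mem_nhds _ hε)
      |>.mono fun q hq => by rwa [dist_comm]
  filter_upwards [hκ.eventually_all.mpr hnear] with q hq u hu
  exact hq (κ u) (mem_image_of_mem κ hu)

theorem continuous_comp_of_finite_image {t : ℝ} {G : (ℝ → E) → (ℝ → V) → ℝ}
    (hG : ∀ x v, DInftyContinuousAt t G x v) {ι : Type*} {κ : ℝ → ι}
    (hκ : (κ '' Icc 0 t).Finite) :
    Continuous fun p : (ι → E) × (ι → V) => G (p.1 ∘ κ) (p.2 ∘ κ) :=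
  continuous_iff_continuousAt.mpr fun p =>
    (hG _ _).tendsto (tendstoUniformlyOn_comp_of_finite_image continuous_fst p hκ)
      (tendstoUniformlyOn_comp_of_finite_image continuous_snd p hκ)

end DInfty

section Adapted

variable {E V : Type*} [NormedAddCommGroup E] [NormedAddCommGroup V]
  [MeasurableSpace E] [BorelSpace E] [SecondCountableTopology E]
  [MeasurableSpace V] [BorelSpace V] [SecondCountableTopology V]
  {Ω : Type*} {m : MeasurableSpace Ω} {ℱ : Filtration ℝ m} {T t : ℝ}
  {X : ℝ → Ω → E} {A : ℝ → Ω → V} {G : (ℝ → E) → (ℝ → V) → ℝ}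

theorem measurable_dyadicApprox (hT : 0 < T) (hX : Adapted ℱ X) (hA : Adapted ℱ A)
    (hGna : ∀ (x x' : ℝ → E) (v v' : ℝ → V), (∀ u ∈ Icc 0 t, x u = x' u) →
      (∀ u ∈ Icc 0 t, v u = v' u) → G x v = G x' v')
    (hG : ∀ x v, DInftyContinuousAt t G x v) (n : ℕ) :
    Measurable[ℱ t] fun ω => G (dyadicApprox T n (X · ω)) (dyadicApprox T n (A · ω)) := by
  set κ : ℝ → ℤ := fun u => ⌊u * 2 ^ n / T⌋
  -- Clamping the grid points to `[0,t]` makes every sample `ℱ_t`-measurable; by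
  -- non-anticipativity only the grid points in `[0,t]`, where clamping does nothing, matter.
  set τ : ℤ → ℝ := fun k => min (max ((k : ℝ) * T / 2 ^ n) 0) t
  have hτκ : ∀ u ∈ Icc 0 t, τ (κ u) = dyadicFloor T n u := fun u hu => by
    have h := dyadicFloor_mem_Icc n hT hu
    show min (max (dyadicFloor T n u) 0) t = _
    rw [max_eq_left h.1, min_eq_left h.2]
  have hκ : (κ '' Icc 0 t).Finite := (Set.finite_Icc 0 (κ t)).subset <| by
    rintro _ ⟨u, hu, rfl⟩
    exact ⟨Int.floor_nonneg.mpr (by have := hu.1; positivity),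
      Int.floor_le_floor (by gcongr; exact hu.2)⟩
  have hsample : Measurable[ℱ t] fun ω => ((X · ω) ∘ τ, (A · ω) ∘ τ) :=
    (@measurable_pi_lambda _ _ _ (ℱ t) _ _ fun k =>
      (hX (τ k)).mono (ℱ.mono (min_le_right _ _)) le_rfl).prodMk
    (@measurable_pi_lambda _ _ _ (ℱ t) _ _ fun k =>
      (hA (τ k)).mono (ℱ.mono (min_le_right _ _)) le_rfl)
  have hfactor : (fun ω => G (dyadicApprox T n (X · ω)) (dyadicApprox T n (A · ω))) =
      (fun p : (ℤ → E) × (ℤ → V) => G (p.1 ∘ κ) (p.2 ∘ κ)) ∘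
        fun ω => ((X · ω) ∘ τ, (A · ω) ∘ τ) := by
    funext ω
    simp only [Function.comp_apply, dyadicApprox_eq_comp n hT.ne']
    exact hGna _ _ _ _ (fun u hu => by simp [hτκ u hu]) (fun u hu => by simp [hτκ u hu])
  rw [hfactor]
  exact (continuous_comp_of_finite_image hG hκ).measurable.comp hsample

end Adapted

theorem statement18_general {d : ℕ} {Ω : Type*} {m : MeasurableSpace Ω}
    (ℱ : Filtration ℝ m) (T : ℝ) (hT : 0 < T) (t : ℝ)
    (X : ℝ → Ω → (Fin d → ℝ)) (A : ℝ → Ω → (Fin d → Fin d → ℝ))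
    (hXadapted : Adapted ℱ X) (hAadapted : Adapted ℱ A)
    (hXcont : ∀ ω, Continuous fun s => X s ω)
    (hAcont : ∀ ω, Continuous fun s => A s ω)
    (F : ℝ → (ℝ → (Fin d → ℝ)) → (ℝ → (Fin d → Fin d → ℝ)) → ℝ)
    -- `F` is non-anticipative: `F_t` depends only on the restriction of the paths to `[0,t]`:
    (hFna : ∀ (s : ℝ) (x x' : ℝ → (Fin d → ℝ)) (v v' : ℝ → (Fin d → Fin d → ℝ)),
      (∀ u ∈ Set.Icc (0:ℝ) s, x u = x' u) → (∀ u ∈ Set.Icc (0:ℝ) s, v u = v' u) →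
      F s x v = F s x' v')
    -- `F` is continuous at fixed times for the `d_∞` metric:
    (hFcont : ∀ (x : ℝ → (Fin d → ℝ)) (v : ℝ → (Fin d → Fin d → ℝ)), ∀ ε > 0, ∃ η > 0,
      ∀ (x' : ℝ → (Fin d → ℝ)) (v' : ℝ → (Fin d → Fin d → ℝ)),
        dInfty t 0 x v x' v' < η → |F t x v - F t x' v'| < ε) :
    (∀ n : ℕ, Measurable[ℱ t] fun ω =>
      F t (dyadicApprox T n (fun s => X s ω)) (dyadicApprox T n (fun s => A s ω))) ∧
    (∀ ω : Ω, Filter.Tendsto (fun n =>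
        F t (dyadicApprox T n (fun s => X s ω)) (dyadicApprox T n (fun s => A s ω)))
      Filter.atTop (nhds (F t (fun s => X s ω) (fun s => A s ω)))) ∧
    Measurable[ℱ t] fun ω => F t (fun s => X s ω) (fun s => A s ω) := by
  have hmeas := measurable_dyadicApprox hT hXadapted hAadapted (hFna t) hFcont
  have hconv : ∀ ω, Tendsto (fun n =>
      F t (dyadicApprox T n (fun s => X s ω)) (dyadicApprox T n (fun s => A s ω)))
      atTop (𝓝 (F t (fun s => X s ω) (fun s => A s ω))) := fun ω =>
    DInftyContinuousAt.tendsto (hFcont _ _)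
      (tendstoUniformlyOn_dyadicApprox hT (hXcont ω).continuousOn)
      (tendstoUniformlyOn_dyadicApprox hT (hAcont ω).continuousOn)
  exact ⟨hmeas, hconv,
    @measurable_of_tendsto_metrizable _ _ (ℱ t) _ _ _ _ _ _ hmeas (tendsto_pi_nhds.mpr hconv)⟩

/-- if `F` is a non-anticipative functional continuous at fixed times in the
`d_∞` metric and `(X,A)` is adapted with continuous paths, then the dyadic approximations
`Yⁿ(t) = F_t(Xⁿ_t,Aⁿ_t)` are `ℱ_t`-measurable, converge pointwise to `Y(t) = F_t(X_t,A_t)`,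
and hence `Y(t)` is `ℱ_t`-measurable, i.e. `Y` is adapted. -/
theorem statement18 {d : ℕ} {Ω : Type*} {m : MeasurableSpace Ω}
    (ℱ : Filtration ℝ m) (T : ℝ) (hT : 0 < T) (t : ℝ) (ht : t ∈ Set.Icc 0 T)
    (X : ℝ → Ω → (Fin d → ℝ)) (A : ℝ → Ω → (Fin d → Fin d → ℝ))
    (hXadapted : Adapted ℱ X) (hAadapted : Adapted ℱ A)
    (hXcont : ∀ ω, Continuous fun s => X s ω)
    (hAcont : ∀ ω, Continuous fun s => A s ω)
    (F : ℝ → (ℝ → (Fin d → ℝ)) → (ℝ → (Fin d → Fin d → ℝ)) → ℝ)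
    -- `F` is non-anticipative: `F_t` depends only on the restriction of the paths to `[0,t]`:
    (hFna : ∀ (s : ℝ) (x x' : ℝ → (Fin d → ℝ)) (v v' : ℝ → (Fin d → Fin d → ℝ)),
      (∀ u ∈ Set.Icc (0:ℝ) s, x u = x' u) → (∀ u ∈ Set.Icc (0:ℝ) s, v u = v' u) →
      F s x v = F s x' v')
    -- `F` is continuous at fixed times for the `d_∞` metric:
    (hFcont : ∀ (x : ℝ → (Fin d → ℝ)) (v : ℝ → (Fin d → Fin d → ℝ)), ∀ ε > 0, ∃ η > 0,
      ∀ (x' : ℝ → (Fin d → ℝ)) (v' : ℝ → (Fin d → Fin d → ℝ)),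
        dInfty t 0 x v x' v' < η → |F t x v - F t x' v'| < ε) :
    (∀ n : ℕ, Measurable[ℱ t] fun ω =>
      F t (dyadicApprox T n (fun s => X s ω)) (dyadicApprox T n (fun s => A s ω))) ∧
    (∀ ω : Ω, Filter.Tendsto (fun n =>
        F t (dyadicApprox T n (fun s => X s ω)) (dyadicApprox T n (fun s => A s ω)))
      Filter.atTop (nhds (F t (fun s => X s ω) (fun s => A s ω)))) ∧
    Measurable[ℱ t] fun ω => F t (fun s => X s ω) (fun s => A s ω) :=
  statement18_general ℱ T hT t X A hXadapted hAadapted hXcont hAcont F hFna hFcont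
end
end
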